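/- Let $F(x,y) = \sqrt{x(x+y)} + \sqrt{(1-x)(1-x-y)} - 1$. For any $y \in (0, 3/4)$, the maximum of $F(x,y)$ over $x \in [0, 1-y]$ is at most $-\frac{1}{16} y^2$. -/

import Mathlib

/-!
With `a = x + y/2` and `b = 1 - x - y/2` (so `a + b = 1`) the two radicands are `a² - y²/4` and
`b² - y²/4`. The tangent-line bound `√(a² - c) ≤ a - c/(2a)` for the concave square root and
`1/a + 1/b ≥ 4` then give `F(x, y) ≤ -y²/2`, which is stronger than the claim.
-/

open Real

lemma Real.sqrt_sq_sub_le {a c : ℝ} (ha : 0 < a) (hc : c ≤ a ^ 2) :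
    √(a ^ 2 - c) ≤ a - c / (2 * a) := by
  have hrhs : a - c / (2 * a) = (a ^ 2 - c + a ^ 2) / (2 * a) := by field_simp; ring
  rw [hrhs, le_div_iff₀ (by positivity)]
  nlinarith [sq_nonneg (√(a ^ 2 - c) - a), Real.sq_sqrt (sub_nonneg.mpr hc)]

lemma four_le_inv_add_inv {a b : ℝ} (ha : 0 < a) (hb : 0 < b) (hab : a + b = 1) :
    4 ≤ 1 / a + 1 / b := by
  rw [div_add_div _ _ ha.ne' hb.ne', le_div_iff₀ (by positivity)]
  nlinarith [sq_nonneg (a - b)]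

lemma Real.sqrt_sq_sub_add_sqrt_sq_sub_le {a b c : ℝ} (ha : 0 < a) (hb : 0 < b) (hab : a + b = 1)
    (hc : 0 ≤ c) (hca : c ≤ a ^ 2) (hcb : c ≤ b ^ 2) :
    √(a ^ 2 - c) + √(b ^ 2 - c) ≤ 1 - 2 * c :=
  calc √(a ^ 2 - c) + √(b ^ 2 - c) ≤ (a - c / (2 * a)) + (b - c / (2 * b)) :=
        add_le_add (sqrt_sq_sub_le ha hca) (sqrt_sq_sub_le hb hcb)
    _ = 1 - c / 2 * (1 / a + 1 / b) := by field_simp; linear_combination (2 * a * b) * hab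
    _ ≤ 1 - c / 2 * 4 := by gcongr; exact four_le_inv_add_inv ha hb hab
    _ = 1 - 2 * c := by ring

theorem F_max_le_general (y : ℝ) (hy0 : 0 < y) :
    ∀ x ∈ Set.Icc (0 : ℝ) (1 - y),
      Real.sqrt (x * (x + y)) + Real.sqrt ((1 - x) * (1 - x - y)) - 1 ≤ -(1 / 16) * y ^ 2 := by
  rintro x ⟨hx0, hx1⟩
  have hxa : x * (x + y) = (x + y / 2) ^ 2 - y ^ 2 / 4 := by ring
  have hxb : (1 - x) * (1 - x - y) = (1 - x - y / 2) ^ 2 - y ^ 2 / 4 := by ring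
  have hbound := sqrt_sq_sub_add_sqrt_sq_sub_le (a := x + y / 2) (b := 1 - x - y / 2)
    (c := y ^ 2 / 4) (by linarith) (by linarith) (by ring) (by positivity)
    (by nlinarith) (by nlinarith)
  rw [hxa, hxb]
  linarith [sq_nonneg y]

/-- For `0 < y < 3/4`, the maximum of `F(x,y) = √(x(x+y)) + √((1-x)(1-x-y)) - 1`
over `x ∈ [0, 1-y]` is at most `-y²/16`. -/
theorem F_max_le (y : ℝ) (hy0 : 0 < y) (hy1 : y < 3 / 4) :
    ∀ x ∈ Set.Icc (0 : ℝ) (1 - y),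
      Real.sqrt (x * (x + y)) + Real.sqrt ((1 - x) * (1 - x - y)) - 1 ≤ -(1 / 16) * y ^ 2 :=
  F_max_le_general y hy0
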